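/- Let H be an atomic monoid and a ∈ H with |R_a| ≥ 2. If z, z' ∈ Z(a) are factorizations with z not R-related to z', each minimal in its R-equivalence class with respect to length, then (z, z') is an atom of the monoid of relations M_H. -/

import Mathlib

open Multiset
open scoped Classical ENNReal

/-- The set of atoms (irreducible elements) of a reduced monoid `M`. -/
abbrev Atom (M : Type) [CancelCommMonoid M] : Type := {u : M // Irreducible u}

/-- The factorization homomorphism `π : Z(H) → H`, where the factorization monoid
`Z(H)` is realized as the free commutative monoid (multiset) over the atoms. -/
def fprod {M : Type} [CancelCommMonoid M] (z : Multiset (Atom M)) : M :=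
  (z.map Subtype.val).prod

/-- The set of factorizations `Z(a)` of `a`. -/
def Zf {M : Type} [CancelCommMonoid M] (a : M) : Set (Multiset (Atom M)) :=
  {z | fprod z = a}

/-- `M` is reduced: the only unit is `1`. -/
def Reduced (M : Type) [CancelCommMonoid M] : Prop := ∀ u : M, IsUnit u → u = 1

/-- `M` is atomic: every non-unit is a product of atoms. -/
def Atomic (M : Type) [CancelCommMonoid M] : Prop :=
  ∀ a : M, ¬ IsUnit a → ∃ z : Multiset (Atom M), fprod z = a

/-- The distance between two factorizations. -/
noncomputable def fdist {M : Type} [CancelCommMonoid M] (z z' : Multiset (Atom M)) : ℕ :=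
  max (card (z - z')) (card (z' - z))

/-- The catenary degree `c(a)`: the least `N` such that any two factorizations of `a`
can be concatenated by an `N`-chain of factorizations of `a`. -/
noncomputable def cat {M : Type} [CancelCommMonoid M] (a : M) : ℕ∞ :=
  sInf {N : ℕ∞ | ∀ z ∈ Zf a, ∀ z' ∈ Zf a,
    Relation.ReflTransGen (fun u v => v ∈ Zf a ∧ (fdist u v : ℕ∞) ≤ N) z z'}

/-- The catenary degree `c(H)`. -/
noncomputable def catH (M : Type) [CancelCommMonoid M] : ℕ∞ := ⨆ a : M, cat a

/-- The `R`-relation on factorizations of `a`: two factorizations are `R`-related if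
they can be joined by a chain of factorizations of `a` whose consecutive members have a
common atom (the degenerate case `z = z' = 1` is the reflexivity case). -/
def RRel {M : Type} [CancelCommMonoid M] (a : M) :
    Multiset (Atom M) → Multiset (Atom M) → Prop :=
  Relation.ReflTransGen (fun u v => u ∈ Zf a ∧ v ∈ Zf a ∧ u ∩ v ≠ 0)

/-- `|R_a| ≥ 2`: `a` has at least two `R`-equivalence classes of factorizations. -/
def TwoClasses {M : Type} [CancelCommMonoid M] (a : M) : Prop :=
  ∃ z ∈ Zf a, ∃ z' ∈ Zf a, ¬ RRel a z z'

/-- `μ(a)`: the supremum over the `R`-classes `ρ` of `Z(a)` of `min {|z| : z ∈ ρ}`. -/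
noncomputable def mu {M : Type} [CancelCommMonoid M] (a : M) : ℕ∞ :=
  ⨆ z ∈ Zf a, ⨅ w ∈ {w | w ∈ Zf a ∧ RRel a z w}, (card w : ℕ∞)

/-- `μ(H) = sup {μ(a) : a ∈ H, |R_a| ≥ 2}`. -/
noncomputable def muH (M : Type) [CancelCommMonoid M] : ℕ∞ :=
  ⨆ a : M, ⨆ (_ : TwoClasses a), mu a

/-- The monoid of relations `M_H ⊆ Z(H) × Z(H)`. -/
def MHset (M : Type) [CancelCommMonoid M] :
    Set (Multiset (Atom M) × Multiset (Atom M)) :=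
  {p | fprod p.1 = fprod p.2}

/-- Atoms of the (reduced) monoid of relations `M_H`. -/
def IsRelAtom {M : Type} [CancelCommMonoid M]
    (p : Multiset (Atom M) × Multiset (Atom M)) : Prop :=
  p ∈ MHset M ∧ p ≠ 0 ∧
    ∀ q r, q ∈ MHset M → r ∈ MHset M → p = q + r → q = 0 ∨ r = 0

/-! Factoring `(z, z') = (x, x') + (y, y')` nontrivially yields the factorization `x + y'`
of `a`, which shares `x` with `z` and `y'` with `z'`; so `z` and `z'` would be `R`-related. -/

section Relations

variable {M : Type} [CancelCommMonoid M]

lemma fprod_add (x y : Multiset (Atom M)) : fprod (x + y) = fprod x * fprod y := by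
  simp [fprod]

lemma eq_zero_of_fprod_eq_one {w : Multiset (Atom M)} (h : fprod w = 1) : w = 0 := by
  by_contra hw
  obtain ⟨u, hu⟩ := exists_mem_of_ne_zero hw
  rw [← cons_erase hu] at h
  simp only [fprod, map_cons, prod_cons] at h
  exact u.2.not_isUnit (IsUnit.of_mul_eq_one _ h)

lemma fst_eq_zero_iff_of_mem_MHset {p : Multiset (Atom M) × Multiset (Atom M)}
    (hp : p ∈ MHset M) : p.1 = 0 ↔ p.2 = 0 := by
  have hp : fprod p.1 = fprod p.2 := hp
  constructor <;> intro h <;> apply eq_zero_of_fprod_eq_one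
  · rw [← hp, h]; simp [fprod]
  · rw [hp, h]; simp [fprod]

lemma inter_ne_zero_of_le {u v w : Multiset (Atom M)} (hw : w ≠ 0) (hu : w ≤ u)
    (hv : w ≤ v) : u ∩ v ≠ 0 :=
  fun h => hw (le_zero.mp (h ▸ le_inf hu hv))

lemma rRel_add_add {a : M} {x x' y y' : Multiset (Atom M)}
    (hxx' : (x, x') ∈ MHset M) (hyy' : (y, y') ∈ MHset M) (ha : x + y ∈ Zf a)
    (hx : x ≠ 0) (hy' : y' ≠ 0) : RRel a (x + y) (x' + y') := by
  have hxx' : fprod x = fprod x' := hxx'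
  have hyy' : fprod y = fprod y' := hyy'
  have hmid : x + y' ∈ Zf a := by
    change fprod (x + y') = a
    rwa [fprod_add, ← hyy', ← fprod_add]
  have hend : x' + y' ∈ Zf a := by
    change fprod (x' + y') = a
    rwa [fprod_add, ← hxx', ← hyy', ← fprod_add]
  refine .tail (.single ⟨ha, hmid, ?_⟩) ⟨hmid, hend, ?_⟩
  · exact inter_ne_zero_of_le hx (le_add_right _ _) (le_add_right _ _)
  · exact inter_ne_zero_of_le hy' (le_add_left _ _) (le_add_left _ _)

end Relations

theorem minimal_pair_isRelAtom_general (M : Type) [CancelCommMonoid M]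
    (a : M) (z z' : Multiset (Atom M))
    (hz : z ∈ Zf a) (hz' : z' ∈ Zf a) (hnr : ¬ RRel a z z') :
    IsRelAtom (z, z') := by
  refine ⟨hz.trans hz'.symm, fun h => hnr ?_, fun q r hq hr hqr => ?_⟩
  · obtain ⟨rfl, rfl⟩ := Prod.mk_eq_zero.mp h
    exact .refl
  · by_contra! hne
    have hq1 : q.1 ≠ 0 := fun h => hne.1 (Prod.ext h ((fst_eq_zero_iff_of_mem_MHset hq).mp h))
    have hr2 : r.2 ≠ 0 := fun h => hne.2 (Prod.ext ((fst_eq_zero_iff_of_mem_MHset hr).mpr h) h)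
    obtain ⟨rfl, rfl⟩ := Prod.mk.inj hqr
    exact hnr (rRel_add_add hq hr hz hq1 hr2)

/-- If `a` has two factorizations `z, z'` which are not `R`-related and are each of
minimal length in their `R`-class, then `(z, z')` is an atom of the monoid of
relations `M_H`. -/
theorem minimal_pair_isRelAtom (M : Type) [CancelCommMonoid M]
    (hred : Reduced M) (hat : Atomic M)
    (a : M) (h2 : TwoClasses a) (z z' : Multiset (Atom M))
    (hz : z ∈ Zf a) (hz' : z' ∈ Zf a) (hnr : ¬ RRel a z z')
    (hmin : ∀ w ∈ Zf a, RRel a z w → card z ≤ card w)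
    (hmin' : ∀ w ∈ Zf a, RRel a z' w → card z' ≤ card w) :
    IsRelAtom (z, z') :=
  minimal_pair_isRelAtom_general M a z z' hz hz' hnr
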